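/- Let m ≥ 3, let A be a semi-symmetric strong M-tensor of order m and dimension n, let b ∈ ℝⁿ with b ≥ 0, I₊ = {i : b_i > 0} nonempty, I₀ = {i : b_i = 0} nonempty, and suppose for every i ∈ I₀ there exist indices i₂,…,i_m ∈ I₊ with a_{i i₂…i_m} ≠ 0. Let 0 < ε′ < ε < 1. Then for every y ∈ F̄_{ε,ε′}, the Schur complement f'(y)_{I₀I₀} − f'(y)_{I₀I₊} f'(y)_{I₊I₊}^{−1} f'(y)_{I₊I₀} is a nonsingular M-matrix. -/

import Mathlib

open Finset Matrix Filter Topology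

noncomputable section

/-- `(A x^{m-1})_i`: action of an `m`th-order `n`-dimensional tensor, stored with its first
index separated and `q = m-1` trailing indices:
`(A x^{m-1})_i = ∑_{i₂,…,i_m} a_{i i₂…i_m} x_{i₂}⋯x_{i_m}`. -/
def tApp {n q : ℕ} (A : Fin n → (Fin q → Fin n) → ℝ) (x : Fin n → ℝ) (i : Fin n) : ℝ :=
  ∑ g : Fin q → Fin n, A i g * ∏ j, x (g j)

/-- Complex version of `tApp` (for eigenvalues). -/
def tAppC {n q : ℕ} (A : Fin n → (Fin q → Fin n) → ℝ) (x : Fin n → ℂ) (i : Fin n) : ℂ :=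
  ∑ g : Fin q → Fin n, (A i g : ℂ) * ∏ j, x (g j)

/-- The identity tensor: entry `1` when all indices coincide, `0` otherwise. -/
def identT (n q : ℕ) : Fin n → (Fin q → Fin n) → ℝ :=
  fun i g => if ∀ j, g j = i then 1 else 0

/-- `lam ∈ ℂ` is an eigenvalue of the tensor `B`: there is a nonzero `x ∈ ℂⁿ` with
`(B x^{m-1})_i = lam * x_i^{m-1}` for all `i`. -/
def IsTensorEigenvalue {n q : ℕ} (B : Fin n → (Fin q → Fin n) → ℝ) (lam : ℂ) : Prop :=
  ∃ x : Fin n → ℂ, x ≠ 0 ∧ ∀ i, tAppC B x i = lam * x i ^ q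

/-- Semi-symmetry: the entries `a_{i i₂…i_m}` are invariant under permutations of `i₂,…,i_m`. -/
def IsSemiSymmetric {n q : ℕ} (A : Fin n → (Fin q → Fin n) → ℝ) : Prop :=
  ∀ (i : Fin n) (g : Fin q → Fin n) (σ : Equiv.Perm (Fin q)), A i (g ∘ σ) = A i g

/-- Z-tensor: all off-diagonal entries are nonpositive. -/
def IsZTensor {n q : ℕ} (A : Fin n → (Fin q → Fin n) → ℝ) : Prop :=
  ∀ (i : Fin n) (g : Fin q → Fin n), ¬(∀ j, g j = i) → A i g ≤ 0

/-- Strong (nonsingular) M-tensor: `A = s·I − B` with `B ≥ 0` and `s > ρ(B)`,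
i.e. `|λ| < s` for every eigenvalue `λ` of `B`. -/
def IsStrongMTensor {n q : ℕ} (A : Fin n → (Fin q → Fin n) → ℝ) : Prop :=
  ∃ (s : ℝ) (B : Fin n → (Fin q → Fin n) → ℝ),
    (∀ i g, 0 ≤ B i g) ∧ (∀ i g, A i g = s * identT n q i g - B i g) ∧
    ∀ lam : ℂ, IsTensorEigenvalue B lam → ‖lam‖ < s

/-- Componentwise power `y^{[α]}`. -/
def cPow {n : ℕ} (y : Fin n → ℝ) (α : ℝ) : Fin n → ℝ := fun i => y i ^ α

/-- Euclidean norm on `Fin n → ℝ`. -/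
def enorm2 {n : ℕ} (x : Fin n → ℝ) : ℝ := Real.sqrt (∑ i, x i ^ 2)

/-- The Jacobian matrix of a map `f : ℝⁿ → ℝⁿ` at `y`. -/
def jacM {n : ℕ} (f : (Fin n → ℝ) → Fin n → ℝ) (y : Fin n → ℝ) :
    Matrix (Fin n) (Fin n) ℝ :=
  fun i j => fderiv ℝ (fun z => f z i) y (Pi.single j 1)

/-- `f(y) = A (y^{[1/(m-1)]})^{m-1} − b`, with `q = m−1`. -/
def fres {n q : ℕ} (A : Fin n → (Fin q → Fin n) → ℝ) (b : Fin n → ℝ)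
    (y : Fin n → ℝ) : Fin n → ℝ :=
  fun i => tApp A (cPow y (1 / (q : ℝ))) i - b i

/-- Nonsingular M-matrix: nonpositive off-diagonal entries and `M = s·1 − N` with
`N ≥ 0` entrywise and `s` larger than the spectral radius of `N`. -/
def IsNonsingularMMatrix {k : Type} [Fintype k] [DecidableEq k] (M : Matrix k k ℝ) : Prop :=
  (∀ i j, i ≠ j → M i j ≤ 0) ∧
  ∃ (s : ℝ) (N : Matrix k k ℝ), (∀ i j, 0 ≤ N i j) ∧
    M = s • (1 : Matrix k k ℝ) - N ∧
    ∀ μ ∈ spectrum ℂ (N.map (fun t : ℝ => (t : ℂ))), ‖μ‖ < s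

/-- The feasible set `F_ε = {y > 0 : A (y^{[1/(m-1)]})^{m-1} ≥ ε b}`. -/
def FSet {n q : ℕ} (A : Fin n → (Fin q → Fin n) → ℝ) (b : Fin n → ℝ) (ε : ℝ) :
    Set (Fin n → ℝ) :=
  {y | (∀ i, 0 < y i) ∧ ∀ i, ε * b i ≤ tApp A (cPow y (1 / (q : ℝ))) i}

/-- Acceptance of the trial steplength `t` in the line search: feasibility and
`‖f(y + t d)‖² ≤ (1 − 2σt)‖f(y)‖²`. -/
def StepOK {n q : ℕ} (A : Fin n → (Fin q → Fin n) → ℝ) (b : Fin n → ℝ)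
    (Fb : Set (Fin n → ℝ)) (σ : ℝ) (y d : Fin n → ℝ) (t : ℝ) : Prop :=
  y + t • d ∈ Fb ∧
    enorm2 (fres A b (y + t • d)) ^ 2 ≤ (1 - 2 * σ * t) * enorm2 (fres A b y) ^ 2

/-- Newton's method (Algorithm 2.4 resp. 3.4) with feasible set `Fb`, never terminating:
`y₀ ∈ Fb`; for every `k`, `f(y_k) ≠ 0`, `d_k` is the unique solution of
`f'(y_k) d = −f(y_k)`, `α_k = ρ^{i_k}` with `i_k` the least acceptable exponent, and
`y_{k+1} = y_k + α_k d_k`. -/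
def NewtonIter {n q : ℕ} (A : Fin n → (Fin q → Fin n) → ℝ) (b : Fin n → ℝ)
    (Fb : Set (Fin n → ℝ)) (σ ρ : ℝ) (y d : ℕ → Fin n → ℝ) (α : ℕ → ℝ) : Prop :=
  y 0 ∈ Fb ∧ ∀ k : ℕ,
    fres A b (y k) ≠ 0 ∧
    jacM (fres A b) (y k) *ᵥ d k = -fres A b (y k) ∧
    (∀ d', jacM (fres A b) (y k) *ᵥ d' = -fres A b (y k) → d' = d k) ∧
    (∃ ik : ℕ, α k = ρ ^ ik ∧ StepOK A b Fb σ (y k) (d k) (ρ ^ ik) ∧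
      ∀ i < ik, ¬StepOK A b Fb σ (y k) (d k) (ρ ^ i)) ∧
    y (k + 1) = y k + α k • d k

/-- Submatrix of `M` with rows indexed by `{i // P i}` and columns by `{i // Q i}`. -/
def subMat {n : ℕ} (M : Matrix (Fin n) (Fin n) ℝ) (P Q : Fin n → Prop) :
    Matrix {i // P i} {i // Q i} ℝ :=
  fun i j => M i.1 j.1

/-- `b` restricted to the index set `I₊ = {i : b_i > 0}`. -/
def bPlus {n : ℕ} (b : Fin n → ℝ) : {i : Fin n // 0 < b i} → ℝ := fun i => b i.1

/-- `F̄¹_ε = {y > 0 : (A(y^{[1/(m−1)]})^{m−1})_i ≥ ε b_i for all i ∈ I₊}`. -/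
def FBar1 {n q : ℕ} (A : Fin n → (Fin q → Fin n) → ℝ) (b : Fin n → ℝ) (ε : ℝ) :
    Set (Fin n → ℝ) :=
  {y | (∀ i, 0 < y i) ∧ ∀ i, 0 < b i → ε * b i ≤ tApp A (cPow y (1 / (q : ℝ))) i}

/-- `F̄²_{ε'} = {y > 0 : f'(y)_{I₊I₊} invertible and
`(A(y^{[1/(m−1)]})^{m−1})_{I₀} ≥ ε' f'(y)_{I₀I₊} f'(y)_{I₊I₊}⁻¹ b_{I₊}` componentwise}. -/
def FBar2 {n q : ℕ} (A : Fin n → (Fin q → Fin n) → ℝ) (b : Fin n → ℝ) (ε' : ℝ) :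
    Set (Fin n → ℝ) :=
  {y | (∀ i, 0 < y i) ∧
    IsUnit (subMat (jacM (fres A b) y) (fun i => 0 < b i) (fun i => 0 < b i)) ∧
    ∀ i : {i : Fin n // b i = 0},
      ε' * (subMat (jacM (fres A b) y) (fun i => b i = 0) (fun i => 0 < b i) *ᵥ
        ((subMat (jacM (fres A b) y) (fun i => 0 < b i) (fun i => 0 < b i))⁻¹ *ᵥ bPlus b)) i
        ≤ tApp A (cPow y (1 / (q : ℝ))) i.1}

/-- `F̄_{ε,ε'} = F̄¹_ε ∩ F̄²_{ε'}`. -/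
def FBar {n q : ℕ} (A : Fin n → (Fin q → Fin n) → ℝ) (b : Fin n → ℝ) (ε ε' : ℝ) :
    Set (Fin n → ℝ) :=
  FBar1 A b ε ∩ FBar2 A b ε'

/-- For every `i ∈ I₀` there exist indices `i₂,…,i_m ∈ I₊` with `a_{i i₂…i_m} ≠ 0`. -/
def I0Hyp {n q : ℕ} (A : Fin n → (Fin q → Fin n) → ℝ) (b : Fin n → ℝ) : Prop :=
  ∀ i : Fin n, b i = 0 → ∃ g : Fin q → Fin n, (∀ j, 0 < b (g j)) ∧ A i g ≠ 0

/-!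
Write `J = f'(y)`. Since `A` is a Z-tensor, `J` is a Z-matrix, and since
`y ↦ A (y^{[1/(m-1)]})^{m-1}` is positively homogeneous of degree one, Euler's identity gives
`J y = A (y^{[1/(m-1)]})^{m-1} =: w`. On `I₊` this yields `J₊₊ y₊ ≥ w₊ ≥ ε b₊ > 0`, so `J₊₊` is
inverse-nonnegative and `p = J₊₊⁻¹ (w₊ - ε' b₊)` is positive. The Schur complement `S` is then a
Z-matrix with `S y₀ = w₀ - J₀₊ J₊₊⁻¹ w₊ ≥ -J₀₊ p`, which is positive because `J₀₊ ≤ 0` has a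
negative entry in every row by the hypothesis on `I₀`. Finally, a Z-matrix mapping a positive
vector to a positive vector is a nonsingular M-matrix: inverse positivity follows by looking at
the index of minimal ratio `zᵢ / xᵢ`, and the spectral bound by the Collatz–Wielandt argument
at the index of maximal ratio `|vᵢ| / xᵢ`.
-/

section ZMatrix

variable {ι : Type*} [Fintype ι] {M : Matrix ι ι ℝ} {x : ι → ℝ}

lemma exists_ratio_mul_le_and_mulVec_le [Nonempty ι] (hM : ∀ i j, i ≠ j → M i j ≤ 0)
    (hx : ∀ i, 0 < x i) (z : ι → ℝ) :
    ∃ i₀, (∀ j, z i₀ / x i₀ * x j ≤ z j) ∧ (M *ᵥ z) i₀ ≤ z i₀ / x i₀ * (M *ᵥ x) i₀ := by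
  obtain ⟨i₀, hi₀⟩ := Finite.exists_min fun j => z j / x j
  have hmin : ∀ j, z i₀ / x i₀ * x j ≤ z j := fun j => (le_div_iff₀ (hx j)).mp (hi₀ j)
  refine ⟨i₀, hmin, ?_⟩
  calc (M *ᵥ z) i₀ = ∑ j, M i₀ j * z j := rfl
    _ ≤ ∑ j, M i₀ j * (z i₀ / x i₀ * x j) := by
        refine sum_le_sum fun j _ => ?_
        rcases eq_or_ne j i₀ with rfl | hj
        · rw [div_mul_cancel₀ _ (hx j).ne']
        · exact mul_le_mul_of_nonpos_left (hmin j) (hM i₀ j hj.symm)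
    _ = z i₀ / x i₀ * (M *ᵥ x) i₀ := by
        simp only [mulVec, dotProduct, mul_sum]
        exact sum_congr rfl fun j _ => by ring

lemma nonneg_of_mulVec_nonneg (hM : ∀ i j, i ≠ j → M i j ≤ 0) (hx : ∀ i, 0 < x i)
    (hMx : ∀ i, 0 < (M *ᵥ x) i) {z : ι → ℝ} (hMz : ∀ i, 0 ≤ (M *ᵥ z) i) (i : ι) :
    0 ≤ z i := by
  have : Nonempty ι := ⟨i⟩
  obtain ⟨i₀, hmin, hle⟩ := exists_ratio_mul_le_and_mulVec_le hM hx z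
  by_contra! hzi
  have ht : z i₀ / x i₀ < 0 := neg_of_mul_neg_left ((hmin i).trans_lt hzi) (hx i).le
  linarith [hMz i₀, mul_neg_of_neg_of_pos ht (hMx i₀)]

lemma pos_of_mulVec_pos (hM : ∀ i j, i ≠ j → M i j ≤ 0) (hx : ∀ i, 0 < x i)
    (hMx : ∀ i, 0 < (M *ᵥ x) i) {z : ι → ℝ} (hMz : ∀ i, 0 < (M *ᵥ z) i) (i : ι) :
    0 < z i := by
  have : Nonempty ι := ⟨i⟩
  obtain ⟨i₀, hmin, hle⟩ := exists_ratio_mul_le_and_mulVec_le hM hx z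
  by_contra! hzi
  have ht : z i₀ / x i₀ ≤ 0 := nonpos_of_mul_nonpos_left ((hmin i).trans hzi) (hx i)
  linarith [hMz i₀, mul_nonpos_of_nonpos_of_nonneg ht (hMx i₀).le]

variable [DecidableEq ι]

lemma inv_nonneg_of_mulVec_pos (hM : ∀ i j, i ≠ j → M i j ≤ 0) (hx : ∀ i, 0 < x i)
    (hMx : ∀ i, 0 < (M *ᵥ x) i) (hunit : IsUnit M) (i j : ι) : 0 ≤ M⁻¹ i j := by
  have hcol : M *ᵥ (M⁻¹ *ᵥ Pi.single j 1) = Pi.single j 1 := by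
    rw [mulVec_mulVec, mul_nonsing_inv _ ((isUnit_iff_isUnit_det M).mp hunit), one_mulVec]
  have := nonneg_of_mulVec_nonneg hM hx hMx (z := M⁻¹ *ᵥ Pi.single j 1)
    (fun k => by rw [hcol]; by_cases hk : k = j <;> simp [hk]) i
  rwa [mulVec_single_one] at this

lemma norm_lt_of_mem_spectrum_of_mulVec_lt {N : Matrix ι ι ℝ} (hN : ∀ i j, 0 ≤ N i j)
    (hx : ∀ i, 0 < x i) {s : ℝ} (hNx : ∀ i, (N *ᵥ x) i < s * x i) {μ : ℂ}
    (hμ : μ ∈ spectrum ℂ (N.map (fun t : ℝ => (t : ℂ)))) : ‖μ‖ < s := by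
  obtain ⟨v, hv, hv₀⟩ : ∃ v, N.map (fun t : ℝ => (t : ℂ)) *ᵥ v = μ • v ∧ v ≠ 0 := by
    rw [← spectrum_toLin', ← Module.End.hasEigenvalue_iff_mem_spectrum] at hμ
    simpa [Module.End.hasEigenvector_iff] using hμ.exists_hasEigenvector
  obtain ⟨i₁, hi₁⟩ := Function.ne_iff.mp hv₀
  have : Nonempty ι := ⟨i₁⟩
  obtain ⟨i₀, hi₀⟩ := Finite.exists_max fun j => ‖v j‖ / x j
  set c := ‖v i₀‖ / x i₀
  have hbound : ∀ j, ‖v j‖ ≤ c * x j := fun j => (div_le_iff₀ (hx j)).mp (hi₀ j)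
  have hc : 0 < c := (div_pos (norm_pos_iff.mpr hi₁) (hx i₁)).trans_le (hi₀ i₁)
  have hrow : μ * v i₀ = ∑ j, (N i₀ j : ℂ) * v j := by
    simpa [mulVec, dotProduct] using (congrFun hv i₀).symm
  have hvi₀ : ‖v i₀‖ = c * x i₀ := (div_mul_cancel₀ _ (hx i₀).ne').symm
  have key : ‖μ‖ * (c * x i₀) < s * (c * x i₀) :=
    calc ‖μ‖ * (c * x i₀) = ‖∑ j, (N i₀ j : ℂ) * v j‖ := by rw [← hrow, norm_mul, hvi₀]
      _ ≤ ∑ j, N i₀ j * ‖v j‖ := by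
          refine (norm_sum_le _ _).trans_eq (sum_congr rfl fun j _ => ?_)
          rw [norm_mul, Complex.norm_real, Real.norm_of_nonneg (hN i₀ j)]
      _ ≤ ∑ j, N i₀ j * (c * x j) :=
          sum_le_sum fun j _ => mul_le_mul_of_nonneg_left (hbound j) (hN i₀ j)
      _ = c * (N *ᵥ x) i₀ := by
          simp only [mulVec, dotProduct, mul_sum]
          exact sum_congr rfl fun j _ => by ring
      _ < c * (s * x i₀) := mul_lt_mul_of_pos_left (hNx i₀) hc
      _ = s * (c * x i₀) := by ring
  exact lt_of_mul_lt_mul_right key (mul_pos hc (hx i₀)).le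

end ZMatrix

lemma isNonsingularMMatrix_of_mulVec_pos {ι : Type} [Fintype ι] [DecidableEq ι]
    {M : Matrix ι ι ℝ} {x : ι → ℝ} (hM : ∀ i j, i ≠ j → M i j ≤ 0) (hx : ∀ i, 0 < x i)
    (hMx : ∀ i, 0 < (M *ᵥ x) i) : IsNonsingularMMatrix M := by
  set s := ∑ i, |M i i|
  have hN : ∀ i j, 0 ≤ (s • (1 : Matrix ι ι ℝ) - M) i j := by
    intro i j
    rcases eq_or_ne i j with rfl | hij
    · have : M i i ≤ s :=
        (le_abs_self _).trans (single_le_sum (fun l _ => abs_nonneg (M l l)) (mem_univ i))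
      simpa using this
    · simpa [one_apply_ne hij] using hM i j hij
  refine ⟨hM, s, s • 1 - M, hN, (sub_sub_cancel _ _).symm, fun μ hμ => ?_⟩
  refine norm_lt_of_mem_spectrum_of_mulVec_lt hN hx (fun i => ?_) hμ
  simpa [sub_mulVec, smul_mulVec] using hMx i

lemma mulVec_neg_of_nonpos_of_exists_neg {ι κ : Type*} [Fintype ι] {C : Matrix κ ι ℝ}
    (hC : ∀ i k, C i k ≤ 0) (i : κ) (hCi : ∃ k, C i k < 0) {p : ι → ℝ} (hp : ∀ k, 0 < p k) :
    (C *ᵥ p) i < 0 := by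
  obtain ⟨k, hk⟩ := hCi
  calc (C *ᵥ p) i = ∑ l, C i l * p l := rfl
    _ < ∑ _l : ι, (0 : ℝ) := sum_lt_sum
        (fun l _ => mul_nonpos_of_nonpos_of_nonneg (hC i l) (hp l).le)
        ⟨k, mem_univ k, mul_neg_of_neg_of_pos hk (hp k)⟩
    _ = 0 := sum_const_zero

section SchurComplement

variable {ι κ : Type*} [Fintype ι] [DecidableEq ι]
  {P : Matrix ι ι ℝ} {B : Matrix ι κ ℝ} {C : Matrix κ ι ℝ} {D : Matrix κ κ ℝ}

lemma schur_apply_nonpos_of_ne (hB : ∀ k j, B k j ≤ 0) (hC : ∀ i k, C i k ≤ 0)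
    (hD : ∀ i j, i ≠ j → D i j ≤ 0) (hPinv : ∀ k l, 0 ≤ P⁻¹ k l) (i j : κ) (hij : i ≠ j) :
    (D - C * P⁻¹ * B) i j ≤ 0 := by
  have hCP : ∀ l, (C * P⁻¹) i l ≤ 0 := fun l =>
    sum_nonpos fun k _ => mul_nonpos_of_nonpos_of_nonneg (hC i k) (hPinv k l)
  have : 0 ≤ (C * P⁻¹ * B) i j :=
    sum_nonneg fun l _ => mul_nonneg_of_nonpos_of_nonpos (hCP l) (hB l j)
  rw [Matrix.sub_apply]
  linarith [hD i j hij]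

lemma schur_mulVec [Fintype κ] (hP : IsUnit P) (yp : ι → ℝ) (y0 : κ → ℝ) :
    (D - C * P⁻¹ * B) *ᵥ y0 = (C *ᵥ yp + D *ᵥ y0) - C *ᵥ (P⁻¹ *ᵥ (P *ᵥ yp + B *ᵥ y0)) := by
  rw [mulVec_add, mulVec_mulVec _ P⁻¹ P, nonsing_inv_mul _ ((isUnit_iff_isUnit_det P).mp hP),
    one_mulVec, mulVec_add, sub_mulVec, mulVec_mulVec, mulVec_mulVec]
  abel

end SchurComplement

theorem isNonsingularMMatrix_schur {ι κ : Type} [Fintype ι] [DecidableEq ι] [Fintype κ]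
    [DecidableEq κ] {P : Matrix ι ι ℝ} {B : Matrix ι κ ℝ} {C : Matrix κ ι ℝ} {D : Matrix κ κ ℝ}
    (hP : ∀ i j, i ≠ j → P i j ≤ 0) (hPu : IsUnit P) (hB : ∀ k j, B k j ≤ 0)
    (hC : ∀ i k, C i k ≤ 0) (hD : ∀ i j, i ≠ j → D i j ≤ 0) (hCrow : ∀ i, ∃ k, C i k < 0)
    {yp : ι → ℝ} {y0 : κ → ℝ} (hyp : ∀ k, 0 < yp k) (hy0 : ∀ i, 0 < y0 i)
    {wp c : ι → ℝ} {w0 : κ → ℝ} (hwp : P *ᵥ yp + B *ᵥ y0 = wp) (hw0 : C *ᵥ yp + D *ᵥ y0 = w0)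
    (hc : ∀ k, 0 ≤ c k) (hcw : ∀ k, c k < wp k) (hCc : ∀ i, (C *ᵥ (P⁻¹ *ᵥ c)) i ≤ w0 i) :
    IsNonsingularMMatrix (D - C * P⁻¹ * B) := by
  have hPy : ∀ k, 0 < (P *ᵥ yp) k := fun k => by
    have hBy : (B *ᵥ y0) k ≤ 0 :=
      sum_nonpos fun j _ => mul_nonpos_of_nonpos_of_nonneg (hB k j) (hy0 j).le
    have := congrFun hwp k
    simp only [Pi.add_apply] at this
    linarith [hc k, hcw k]
  have hPinv := inv_nonneg_of_mulVec_pos hP hyp hPy hPu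
  have hp : ∀ k, 0 < (P⁻¹ *ᵥ (wp - c)) k := pos_of_mulVec_pos hP hyp hPy fun k => by
    rw [mulVec_mulVec, mul_nonsing_inv _ ((isUnit_iff_isUnit_det P).mp hPu), one_mulVec,
      Pi.sub_apply, sub_pos]
    exact hcw k
  refine isNonsingularMMatrix_of_mulVec_pos (schur_apply_nonpos_of_ne hB hC hD hPinv) hy0
    fun i => ?_
  have hCp := mulVec_neg_of_nonpos_of_exists_neg hC i (hCrow i) hp
  rw [mulVec_sub, mulVec_sub] at hCp
  rw [schur_mulVec hPu yp, hwp, hw0]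
  simp only [Pi.sub_apply] at hCp ⊢
  linarith [hCc i]

section Monomial

variable {ι κ : Type*} [Fintype ι] [Fintype κ] [DecidableEq κ] {y : ι → ℝ}

lemma hasFDerivAt_prod_rpow (g : κ → ι) (α : ℝ) (hy : ∀ i, 0 < y i) :
    HasFDerivAt (fun z : ι → ℝ => ∏ j, z (g j) ^ α)
      (∑ j, (∏ l ∈ univ.erase j, y (g l) ^ α) •
        (α * y (g j) ^ (α - 1)) • ContinuousLinearMap.proj (R := ℝ) (φ := fun _ : ι => ℝ) (g j))
      y :=
  HasFDerivAt.finsetProd fun j _ =>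
    (hasFDerivAt_apply (g j) y).rpow_const (Or.inl (hy (g j)).ne')

lemma fderiv_prod_rpow_single [DecidableEq ι] (g : κ → ι) (α : ℝ) (hy : ∀ i, 0 < y i) (k : ι) :
    fderiv ℝ (fun z : ι → ℝ => ∏ j, z (g j) ^ α) y (Pi.single k 1) =
      α * #{j | g j = k} * (∏ j, y (g j) ^ α) / y k := by
  have hterm : ∀ j, g j = k →
      (∏ l ∈ univ.erase j, y (g l) ^ α) * (α * y (g j) ^ (α - 1)) =
        α * (∏ l, y (g l) ^ α) / y k := by
    rintro j rfl
    rw [← prod_erase_mul _ _ (mem_univ j), Real.rpow_sub_one (hy (g j)).ne']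
    field_simp
  rw [(hasFDerivAt_prod_rpow g α hy).fderiv]
  simp only [FunLike.coe_sum, Finset.sum_apply, FunLike.coe_smul, Pi.smul_apply,
    ContinuousLinearMap.proj_apply, Pi.single_apply, smul_eq_mul, mul_ite, mul_one, mul_zero]
  rw [sum_ite, sum_const_zero, add_zero,
    sum_congr rfl fun j hj => hterm j (mem_filter.mp hj).2, sum_const, nsmul_eq_mul]
  ring

end Monomial

lemma IsStrongMTensor.isZTensor {n q : ℕ} {A : Fin n → (Fin q → Fin n) → ℝ}
    (hA : IsStrongMTensor A) : IsZTensor A := by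
  obtain ⟨s, B, hB, hAB, -⟩ := hA
  intro i g hg
  simpa [hAB, identT, hg] using hB i g

section Jacobian

variable {n q : ℕ} {y : Fin n → ℝ}

lemma jacM_fres_apply (A : Fin n → (Fin q → Fin n) → ℝ) (b : Fin n → ℝ) (hy : ∀ i, 0 < y i)
    (i k : Fin n) :
    jacM (fres A b) y i k =
      ∑ g, A i g * (1 / q * #{j | g j = k} * (∏ j, y (g j) ^ (1 / (q : ℝ))) / y k) := by
  have hmono := fun g : Fin q → Fin n => hasFDerivAt_prod_rpow g (1 / (q : ℝ)) hy
  have hfres : (fun z => fres A b z i) =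
      fun z => (∑ g, A i g * ∏ j, z (g j) ^ (1 / (q : ℝ))) - b i := by
    ext z
    simp [fres, tApp, cPow]
  rw [jacM, hfres, fderiv_sub_const,
    fderiv_fun_sum fun g _ => (hmono g).differentiableAt.const_mul _]
  simp only [FunLike.coe_sum, Finset.sum_apply]
  refine sum_congr rfl fun g _ => ?_
  rw [fderiv_const_mul (hmono g).differentiableAt, _root_.smul_apply, smul_eq_mul,
    fderiv_prod_rpow_single g _ hy k]

lemma jacM_fres_mulVec_self (A : Fin n → (Fin q → Fin n) → ℝ) (b : Fin n → ℝ) (hq : q ≠ 0)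
    (hy : ∀ i, 0 < y i) : jacM (fres A b) y *ᵥ y = tApp A (cPow y (1 / (q : ℝ))) := by
  ext i
  simp only [mulVec, dotProduct, jacM_fres_apply A b hy, sum_mul]
  rw [sum_comm, tApp]
  refine sum_congr rfl fun g _ => ?_
  have hk : ∀ k, A i g * (1 / q * #{j | g j = k} * (∏ j, y (g j) ^ (1 / (q : ℝ))) / y k) * y k
      = A i g * (∏ j, y (g j) ^ (1 / (q : ℝ))) / q * #{j | g j = k} := fun k => by
    field_simp [(hy k).ne']
  rw [sum_congr rfl fun k _ => hk k, ← mul_sum, ← Nat.cast_sum,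
    ← card_eq_sum_card_fiberwise fun j _ => mem_univ (g j), card_univ, Fintype.card_fin]
  field_simp [hq]
  rfl

variable {A : Fin n → (Fin q → Fin n) → ℝ}

lemma jacM_fres_summand_nonpos (hA : IsZTensor A) (hy : ∀ i, 0 < y i) {i k : Fin n}
    (hik : i ≠ k) (g : Fin q → Fin n) :
    A i g * (1 / q * #{j | g j = k} * (∏ j, y (g j) ^ (1 / (q : ℝ))) / y k) ≤ 0 := by
  by_cases hg : ∃ j, g j = k
  · obtain ⟨j, hj⟩ := hg
    refine mul_nonpos_of_nonpos_of_nonneg (hA i g fun h => hik ((h j).symm.trans hj)) ?_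
    have hprod := prod_nonneg fun j (_ : j ∈ univ) =>
      Real.rpow_nonneg (hy (g j)).le (1 / (q : ℝ))
    have hyk := (hy k).le
    positivity
  · have : #{j | g j = k} = 0 :=
      card_eq_zero.mpr (filter_eq_empty_iff.mpr fun j _ h => hg ⟨j, h⟩)
    simp [this]

lemma jacM_fres_nonpos (b : Fin n → ℝ) (hA : IsZTensor A) (hy : ∀ i, 0 < y i) {i k : Fin n}
    (hik : i ≠ k) : jacM (fres A b) y i k ≤ 0 := by
  rw [jacM_fres_apply A b hy]
  exact sum_nonpos fun g _ => jacM_fres_summand_nonpos hA hy hik g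

lemma jacM_fres_neg (b : Fin n → ℝ) (hA : IsZTensor A) (hy : ∀ i, 0 < y i) {i k : Fin n}
    (hik : i ≠ k) {g : Fin q → Fin n} (hg : A i g ≠ 0) {j : Fin q} (hj : g j = k) :
    jacM (fres A b) y i k < 0 := by
  have hAg : A i g < 0 := (hA i g fun h => hik ((h j).symm.trans hj)).lt_of_ne hg
  have hq : (0 : ℝ) < q := Nat.cast_pos.mpr j.pos
  have hc : (0 : ℝ) < #{j | g j = k} :=
    Nat.cast_pos.mpr (card_pos.mpr ⟨j, mem_filter.mpr ⟨mem_univ j, hj⟩⟩)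
  have hprod := prod_pos fun j (_ : j ∈ univ) => Real.rpow_pos_of_pos (hy (g j)) (1 / (q : ℝ))
  have hyk := hy k
  rw [jacM_fres_apply A b hy]
  calc _ < ∑ _g : Fin q → Fin n, (0 : ℝ) := sum_lt_sum
        (fun g _ => jacM_fres_summand_nonpos hA hy hik g)
        ⟨g, mem_univ g, mul_neg_of_neg_of_pos hAg (by positivity)⟩
    _ = 0 := sum_const_zero

end Jacobian

lemma subMat_mulVec_add_subMat_mulVec {n : ℕ} (M : Matrix (Fin n) (Fin n) ℝ)
    (R P Q : Fin n → Prop) [DecidablePred P] [DecidablePred Q] (hPQ : ∀ i, Q i ↔ ¬P i)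
    (y : Fin n → ℝ) :
    subMat M R P *ᵥ (fun k => y k.1) + subMat M R Q *ᵥ (fun k => y k.1) =
      fun i => (M *ᵥ y) i.1 := by
  ext i
  exact (congrArg (_ + ·) (Fintype.sum_equiv (Equiv.subtypeEquivRight hPQ) _
    (fun k : {x // ¬P x} => M i k.1 * y k.1) fun _ => rfl)).trans
    (Fintype.sum_subtype_add_sum_subtype P fun k => M i k * y k)

theorem schur_complement_nonsingular_M_general {m n : ℕ} (hm : 3 ≤ m)
    (A : Fin n → (Fin (m - 1) → Fin n) → ℝ)
    (hM : IsStrongMTensor A)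
    (b : Fin n → ℝ) (hb : ∀ i, 0 ≤ b i)
    (hI0 : I0Hyp A b)
    (ε ε' : ℝ) (h1 : 0 < ε') (h2 : ε' < ε) :
    ∀ y ∈ FBar A b ε ε',
      IsNonsingularMMatrix
        (subMat (jacM (fres A b) y) (fun i => b i = 0) (fun i => b i = 0) -
          subMat (jacM (fres A b) y) (fun i => b i = 0) (fun i => 0 < b i) *
            (subMat (jacM (fres A b) y) (fun i => 0 < b i) (fun i => 0 < b i))⁻¹ *
            subMat (jacM (fres A b) y) (fun i => 0 < b i) (fun i => b i = 0)) := by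
  rintro y ⟨⟨hy, hFB1⟩, -, hunit, hFB2⟩
  have hsplit : ∀ i, b i = 0 ↔ ¬0 < b i := fun i => (hb i).not_lt_iff_eq'.symm
  have hne : ∀ {i k}, b i = 0 → 0 < b k → i ≠ k := fun hi hk h => (hsplit _).mp hi (h ▸ hk)
  have hJ : ∀ {i k}, i ≠ k → jacM (fres A b) y i k ≤ 0 := jacM_fres_nonpos b hM.isZTensor hy
  have hEuler := jacM_fres_mulVec_self A b (by omega : m - 1 ≠ 0) hy
  have hrow : ∀ i : {i // b i = 0}, ∃ k : {k // 0 < b k}, jacM (fres A b) y i k < 0 := by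
    intro i
    obtain ⟨g, hgb, hg⟩ := hI0 i i.2
    let j : Fin (m - 1) := ⟨0, by omega⟩
    exact ⟨⟨g j, hgb j⟩, jacM_fres_neg b hM.isZTensor hy (hne i.2 (hgb j)) hg rfl⟩
  exact isNonsingularMMatrix_schur (c := ε' • bPlus b)
    (fun i j hij => hJ (Subtype.coe_injective.ne hij)) hunit
    (fun k j => hJ (hne j.2 k.2).symm) (fun i k => hJ (hne i.2 k.2))
    (fun i j hij => hJ (Subtype.coe_injective.ne hij)) hrow (fun k => hy k.1) (fun i => hy i.1)
    ((subMat_mulVec_add_subMat_mulVec _ _ _ _ hsplit y).trans (by rw [hEuler]))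
    ((subMat_mulVec_add_subMat_mulVec _ _ _ _ hsplit y).trans (by rw [hEuler]))
    (fun k => mul_nonneg h1.le k.2.le)
    (fun k => (mul_lt_mul_of_pos_right h2 k.2).trans_le (hFB1 k k.2))
    (fun i => by simpa [mulVec_smul] using hFB2 i)

theorem schur_complement_nonsingular_M {m n : ℕ} (hm : 3 ≤ m)
    (A : Fin n → (Fin (m - 1) → Fin n) → ℝ)
    (hsym : IsSemiSymmetric A) (hM : IsStrongMTensor A)
    (b : Fin n → ℝ) (hb : ∀ i, 0 ≤ b i) (hbp : ∃ i, 0 < b i) (hb0 : ∃ i, b i = 0)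
    (hI0 : I0Hyp A b)
    (ε ε' : ℝ) (h1 : 0 < ε') (h2 : ε' < ε) (h3 : ε < 1) :
    ∀ y ∈ FBar A b ε ε',
      IsNonsingularMMatrix
        (subMat (jacM (fres A b) y) (fun i => b i = 0) (fun i => b i = 0) -
          subMat (jacM (fres A b) y) (fun i => b i = 0) (fun i => 0 < b i) *
            (subMat (jacM (fres A b) y) (fun i => 0 < b i) (fun i => 0 < b i))⁻¹ *
            subMat (jacM (fres A b) y) (fun i => 0 < b i) (fun i => b i = 0)) :=
  schur_complement_nonsingular_M_general hm A hM b hb hI0 ε ε' h1 h2
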